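/- Breadth-2 closure: if a family S of subsets of X has the property that for all A, B, C ∈ S with A ∩ B ∩ C ≠ ∅, there exist two of them whose intersection equals A ∩ B ∩ C, then by induction every nonempty finite intersection of m ≥ 2 members of S equals the intersection of some 2 of them. -/

import Mathlib

/-!
Fix a point `x` of the intersection. A singleton member is then `{x}`, a coset member is then
`x + W`, and `{x}` lies inside every member. Hence the members split into two classes, each
totally ordered by inclusion: the singletons together with the initial segments, and the
cosets. The intersection is the meet of the least member of each class.
-/

section Lattice

variable {ι α : Type*}

lemma exists_forall_le_of_pairwise_comparable [Finite ι] [Nonempty ι] [Preorder α]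
    (f : ι → α) (p : ι → Prop) (hp : ∀ i j, p i → p j → f i ≤ f j ∨ f j ≤ f i) :
    ∃ k, ∀ i, p i → f k ≤ f i := by
  by_cases hne : ∃ i, p i
  · obtain ⟨k, hk, hmin⟩ := Set.toFinite {i | p i} |>.exists_minimalFor f _ hne
    exact ⟨k, fun i hi => (hp k i hk hi).elim id (hmin hi)⟩
  · exact ⟨Classical.arbitrary ι, fun i hi => absurd ⟨i, hi⟩ hne⟩

lemma exists_iInf_eq_inf_of_pairwise_comparable [Finite ι] [Nonempty ι] [CompleteLattice α]
    (f : ι → α) (p : ι → Prop)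
    (hp : ∀ i j, p i → p j → f i ≤ f j ∨ f j ≤ f i)
    (hnp : ∀ i j, ¬p i → ¬p j → f i ≤ f j ∨ f j ≤ f i) :
    ∃ j k, ⨅ i, f i = f j ⊓ f k := by
  obtain ⟨j, hj⟩ := exists_forall_le_of_pairwise_comparable f p hp
  obtain ⟨k, hk⟩ := exists_forall_le_of_pairwise_comparable f (fun i => ¬p i) hnp
  refine ⟨j, k, le_antisymm (le_inf (iInf_le f j) (iInf_le f k)) (le_iInf fun i => ?_)⟩
  by_cases hi : p i
  · exact inf_le_left.trans (hj i hi)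
  · exact inf_le_right.trans (hk i hi)

end Lattice

lemma Set.subset_or_subset_of_singleton_or_isLowerSet {X : Type*} [LinearOrder X]
    {s t : Set X} {x : X} (hxs : x ∈ s) (hxt : x ∈ t)
    (hs : (∃ c, s = {c}) ∨ IsLowerSet s) (ht : (∃ c, t = {c}) ∨ IsLowerSet t) :
    s ⊆ t ∨ t ⊆ s := by
  rcases hs with ⟨c, rfl⟩ | hs
  · exact .inl (Set.singleton_subset_iff.mpr (Set.mem_singleton_iff.mp hxs ▸ hxt))
  rcases ht with ⟨c, rfl⟩ | ht
  · exact .inr (Set.singleton_subset_iff.mpr (Set.mem_singleton_iff.mp hxt ▸ hxs))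
  exact hs.total ht

lemma AddSubgroup.setOf_sub_mem_eq_of_sub_mem {X : Type*} [AddGroup X] (W : AddSubgroup X)
    {x c : X} (hx : x - c ∈ W) : {y | y - c ∈ W} = {y | y - x ∈ W} := by
  ext y
  constructor
  · intro hy
    simpa only [Set.mem_ofPred_eq, sub_sub_sub_cancel_right] using W.sub_mem hy hx
  · intro hy
    simpa only [Set.mem_ofPred_eq, sub_add_sub_cancel] using W.add_mem hy hx

theorem stmt_17_general {X : Type*} [AddCommGroup X] [LinearOrder X] (W : AddSubgroup X)
    (m : ℕ) (hm : 2 ≤ m) (A : Fin m → Set X)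
    (hA : ∀ i, (∃ c, A i = {c}) ∨ (∀ x y : X, x ∈ A i → y ≤ x → y ∈ A i) ∨
      (∃ c, A i = {x | x - c ∈ W}))
    (hne : (⋂ i, A i).Nonempty) :
    ∃ j k, (⋂ i, A i) = A j ∩ A k := by
  have : Nonempty (Fin m) := ⟨⟨0, by omega⟩⟩
  obtain ⟨x, hx⟩ := hne
  have hxA : ∀ i, x ∈ A i := Set.mem_iInter.mp hx
  let IsCoset i := ∃ c, A i = {y | y - c ∈ W}
  have hcoset : ∀ i, IsCoset i → A i = {y | y - x ∈ W} := by
    rintro i ⟨c, hc⟩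
    have hxc : x - c ∈ W := by simpa [hc] using hxA i
    rw [hc, W.setOf_sub_mem_eq_of_sub_mem hxc]
  have hsegment : ∀ i, ¬IsCoset i → (∃ c, A i = {c}) ∨ IsLowerSet (A i) := fun i hi =>
    (hA i).imp_right fun h _ _ hle hmem => h.resolve_right hi _ _ hmem hle
  refine exists_iInf_eq_inf_of_pairwise_comparable A IsCoset (fun i j hi hj => ?_)
    (fun i j hi hj => ?_)
  · exact .inl (hcoset i hi ▸ hcoset j hj ▸ le_rfl)
  · exact Set.subset_or_subset_of_singleton_or_isLowerSet (hxA i) (hxA j)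
      (hsegment i hi) (hsegment j hj)

/-- Breadth-2 for a family in which each member is a singleton, an initial segment, or a
coset of a fixed subgroup: any nonempty finite intersection equals an intersection of two. -/
theorem stmt_17 {X : Type*} [AddCommGroup X] [LinearOrder X] [IsOrderedAddMonoid X] (W : AddSubgroup X)
    (m : ℕ) (hm : 2 ≤ m) (A : Fin m → Set X)
    (hA : ∀ i, (∃ c, A i = {c}) ∨ (∀ x y : X, x ∈ A i → y ≤ x → y ∈ A i) ∨
      (∃ c, A i = {x | x - c ∈ W}))
    (hne : (⋂ i, A i).Nonempty) :
    ∃ j k, (⋂ i, A i) = A j ∩ A k :=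
  stmt_17_general W m hm A hA hne
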